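/- Let H be a graph and n ≥ 3 an integer, and let K_{1,n} denote the star graph with one centre and n leaves. Then: (i) if γ_r(H) ∈ {2,3}, then γ_r(K_{1,n}∘H) = γ_r(H); (ii) if γ_r(H) ≥ 4, then 3 ≤ γ_r(K_{1,n}∘H) ≤ 4; (iii) if γ(H) ≥ 4, then γ_r(K_{1,n}∘H) = 4. -/

import Mathlib

open Finset
open scoped Classical

/-- The lexicographic product of two simple graphs. -/
def lexProd {α β : Type*} (G : SimpleGraph α) (H : SimpleGraph β) :
    SimpleGraph (α × β) where
  Adj p q := G.Adj p.1 q.1 ∨ (p.1 = q.1 ∧ H.Adj p.2 q.2)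
  symm := by
    constructor
    rintro ⟨a, b⟩ ⟨c, d⟩ (h | ⟨h1, h2⟩)
    · exact Or.inl h.symm
    · exact Or.inr ⟨h1.symm, h2.symm⟩
  loopless := by
    constructor
    rintro ⟨a, b⟩ (h | ⟨h1, h2⟩)
    · exact G.loopless.irrefl a h
    · exact H.loopless.irrefl b h2

/-- A vertex `w` is undefended with respect to `g` if `g w = 0` and `g x = 0`
for every neighbour `x` of `w`. -/
def Undefended {α : Type*} (G : SimpleGraph α) (g : α → ℕ) (w : α) : Prop :=
  g w = 0 ∧ ∀ x, G.Adj w x → g x = 0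

/-- A weak Roman dominating function. -/
def IsWRDF {α : Type*} (G : SimpleGraph α) (f : α → ℕ) : Prop :=
  (∀ v, f v ≤ 2) ∧
    ∀ v, f v = 0 → ∃ u, G.Adj u v ∧ 1 ≤ f u ∧
      ∀ w, ¬ Undefended G (Function.update (Function.update f v 1) u (f u - 1)) w

/-- The weak Roman domination number. -/
noncomputable def weakRomanNumber {α : Type*} (G : SimpleGraph α) [Fintype α] : ℕ :=
  sInf {k | ∃ f : α → ℕ, IsWRDF G f ∧ ∑ v, f v = k}

/-- A dominating set. -/
def IsDomSet {α : Type*} (G : SimpleGraph α) (D : Finset α) : Prop :=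
  ∀ v ∉ D, ∃ u ∈ D, G.Adj u v

/-- The domination number. -/
noncomputable def domNumber {α : Type*} (G : SimpleGraph α) [Fintype α] : ℕ :=
  sInf {k | ∃ D : Finset α, IsDomSet G D ∧ D.card = k}

/-- A total dominating set. -/
def IsTotalDomSet {α : Type*} (G : SimpleGraph α) (S : Finset α) : Prop :=
  ∀ v, ∃ u ∈ S, G.Adj u v

/-- The total domination number. -/
noncomputable def totalDomNumber {α : Type*} (G : SimpleGraph α) [Fintype α] : ℕ :=
  sInf {k | ∃ S : Finset α, IsTotalDomSet G S ∧ S.card = k}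

/-- A double total dominating set: every vertex has at least two neighbours in `S`. -/
def IsDoubleTotalDomSet {α : Type*} (G : SimpleGraph α) (S : Finset α) : Prop :=
  ∀ v, ∃ u₁ ∈ S, ∃ u₂ ∈ S, u₁ ≠ u₂ ∧ G.Adj u₁ v ∧ G.Adj u₂ v

/-- The double total domination number. -/
noncomputable def doubleTotalDomNumber {α : Type*} (G : SimpleGraph α) [Fintype α] : ℕ :=
  sInf {k | ∃ S : Finset α, IsDoubleTotalDomSet G S ∧ S.card = k}

/-- A 2-packing: the closed neighbourhoods of distinct members are disjoint. -/
def IsTwoPacking {α : Type*} (G : SimpleGraph α) (X : Finset α) : Prop :=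
  ∀ u ∈ X, ∀ v ∈ X, u ≠ v →
    ∀ w, ¬ ((w = u ∨ G.Adj u w) ∧ (w = v ∨ G.Adj v w))

/-- The 2-packing number. -/
noncomputable def twoPackingNumber {α : Type*} (G : SimpleGraph α) [Fintype α] : ℕ :=
  sSup {k | ∃ X : Finset α, IsTwoPacking G X ∧ X.card = k}

/-- A secure dominating set. -/
def IsSecureDomSet {α : Type*} (G : SimpleGraph α) (S : Finset α) : Prop :=
  IsDomSet G S ∧ ∀ v ∉ S, ∃ u ∈ S, G.Adj u v ∧ IsDomSet G (insert v (S.erase u))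

/-- The secure domination number. -/
noncomputable def secureDomNumber {α : Type*} (G : SimpleGraph α) [Fintype α] : ℕ :=
  sInf {k | ∃ S : Finset α, IsSecureDomSet G S ∧ S.card = k}

/-- The corona product of two graphs. -/
def corona {α β : Type*} (G₁ : SimpleGraph α) (G₂ : SimpleGraph β) :
    SimpleGraph (α ⊕ α × β) where
  Adj x y :=
    match x, y with
    | .inl a, .inl a' => G₁.Adj a a'
    | .inl a, .inr p => a = p.1
    | .inr p, .inl a => p.1 = a
    | .inr p, .inr q => p.1 = q.1 ∧ G₂.Adj p.2 q.2
  symm := by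
    constructor
    rintro (a | p) (a' | q) h
    · exact G₁.symm.symm _ _ h
    · exact h.symm
    · exact h.symm
    · exact ⟨h.1.symm, G₂.symm.symm _ _ h.2⟩
  loopless := by
    constructor
    rintro (a | p) h
    · exact G₁.loopless.irrefl a h
    · exact G₂.loopless.irrefl p.2 h.2



/-
Let `g` be a WRDF of `K_{1,n} ∘ H` of weight `w`. If the copies of `H` adjacent to a copy carry
no weight, `g` restricted to that copy is a WRDF of `H`. If they carry a single unit, defending a
vertex left undominated inside the copy uses up that unit, so the support of the copy plus one
vertex dominates `H`. Applied to the centre copy when the leaf copies carry at most one unit,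
and to a leaf copy otherwise, this gives `γ(H) ≤ w` whenever `w ≤ 3`, and `γ_r(H) ≤ w` whenever
`w ≤ 2` (the mixed case has an empty leaf copy, whence `γ(H) ≤ 1` and `γ_r(H) ≤ 2γ(H) ≤ 2`).
Conversely, a WRDF of `H` of weight at least `2` placed on the centre copy is a WRDF of the
product, and a centre and a leaf vertex over the same vertex of `H` dominate the product, so
`γ_r(K_{1,n} ∘ H) ≤ 2 · 2`.
-/

open Function

section WeakRoman

variable {α : Type*}

/-- The function `f'` in the definition of a WRDF. -/
noncomputable def moveUnit (f : α → ℕ) (u v : α) : α → ℕ :=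
  update (update f v 1) u (f u - 1)

theorem isWRDF_iff {G : SimpleGraph α} {f : α → ℕ} :
    IsWRDF G f ↔ (∀ v, f v ≤ 2) ∧
      ∀ v, f v = 0 → ∃ u, G.Adj u v ∧ 1 ≤ f u ∧ ∀ w, ¬ Undefended G (moveUnit f u v) w :=
  Iff.rfl

@[simp]
theorem moveUnit_apply_left (f : α → ℕ) (u v : α) : moveUnit f u v u = f u - 1 :=
  update_self ..

theorem moveUnit_apply_right (f : α → ℕ) {u v : α} (h : u ≠ v) : moveUnit f u v v = 1 := by
  rw [moveUnit, update_of_ne h.symm, update_self]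

theorem moveUnit_apply_of_ne (f : α → ℕ) {u v w : α} (hu : w ≠ u) (hv : w ≠ v) :
    moveUnit f u v w = f w := by
  rw [moveUnit, update_of_ne hu, update_of_ne hv]

theorem IsWRDF.exists_defender {G : SimpleGraph α} {f : α → ℕ} (hf : IsWRDF G f) {v : α}
    (hv : f v = 0) : ∃ u, G.Adj u v ∧ 1 ≤ f u ∧ ∀ w, ¬ Undefended G (moveUnit f u v) w :=
  hf.2 v hv

variable {G : SimpleGraph α}

theorem IsDomSet.isWRDF_double {D : Finset α} (hD : IsDomSet G D) :
    IsWRDF G fun v => if v ∈ D then 2 else 0 := by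
  refine ⟨fun v => by dsimp only; split_ifs <;> omega, fun v hv => ?_⟩
  have hvD : v ∉ D := by simpa using hv
  obtain ⟨u, huD, huv⟩ := hD v hvD
  refine ⟨u, huv, by simp [huD], ?_⟩
  have hpos : ∀ x, x = v ∨ x ∈ D → moveUnit (fun v => if v ∈ D then 2 else 0) u v x ≠ 0 := by
    rintro x hx
    by_cases hxu : x = u
    · simp [hxu, huD]
    by_cases hxv : x = v
    · simp [hxv, moveUnit_apply_right _ huv.ne]
    rw [moveUnit_apply_of_ne _ hxu hxv]
    simp [hx.resolve_left hxv]
  rintro w ⟨hw0, hwn⟩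
  by_cases hw : w = v ∨ w ∈ D
  · exact hpos w hw hw0
  obtain ⟨x, hxD, hxw⟩ := hD w (by tauto)
  exact hpos x (Or.inr hxD) (hwn x hxw.symm)

variable [Fintype α]

theorem exists_two_units_of_two_le_sum {f : α → ℕ} (hsum : 2 ≤ ∑ v, f v) :
    ∃ u v, f u ≠ 0 ∧ f v ≠ 0 ∧ (v = u → 2 ≤ f u) := by
  obtain ⟨u, -, hu⟩ := exists_ne_zero_of_sum_ne_zero (by omega : ∑ v, f v ≠ 0)
  by_cases h2 : 2 ≤ f u
  · exact ⟨u, u, hu, hu, fun _ => h2⟩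
  have hsplit := add_sum_erase _ f (mem_univ u)
  obtain ⟨v, hv, hv0⟩ := exists_ne_zero_of_sum_ne_zero (by omega : ∑ v ∈ univ.erase u, f v ≠ 0)
  exact ⟨u, v, hu, hv0, fun h => absurd h (mem_erase.mp hv).1⟩

theorem weakRomanNumber_le_sum {f : α → ℕ} (hf : IsWRDF G f) :
    weakRomanNumber G ≤ ∑ v, f v :=
  Nat.sInf_le ⟨f, hf, rfl⟩

theorem exists_isWRDF_sum_eq_weakRomanNumber (G : SimpleGraph α) :
    ∃ f, IsWRDF G f ∧ ∑ v, f v = weakRomanNumber G := by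
  have hne : {k | ∃ f, IsWRDF G f ∧ ∑ v, f v = k}.Nonempty :=
    ⟨_, fun _ => 2, ⟨fun _ => le_rfl, fun _ h => absurd h two_ne_zero⟩, rfl⟩
  exact Nat.sInf_mem hne

theorem domNumber_le_card {D : Finset α} (hD : IsDomSet G D) : domNumber G ≤ D.card :=
  Nat.sInf_le ⟨D, hD, rfl⟩

theorem exists_isDomSet_card_eq_domNumber (G : SimpleGraph α) :
    ∃ D, IsDomSet G D ∧ D.card = domNumber G := by
  have hne : {k | ∃ D, IsDomSet G D ∧ D.card = k}.Nonempty :=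
    ⟨_, univ, fun v hv => absurd (mem_univ v) hv, rfl⟩
  exact Nat.sInf_mem hne

theorem card_filter_ne_zero_le_sum (f : α → ℕ) : #(univ.filter fun v => f v ≠ 0) ≤ ∑ v, f v := by
  rw [← sum_filter_ne_zero]
  simpa using card_nsmul_le_sum _ f 1 fun v hv => Nat.one_le_iff_ne_zero.mpr (mem_filter.mp hv).2

theorem IsWRDF.isDomSet_support {f : α → ℕ} (hf : IsWRDF G f) :
    IsDomSet G (univ.filter fun v => f v ≠ 0) := by
  intro v hv
  obtain ⟨u, huv, hu, -⟩ := hf.exists_defender (by simpa using hv)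
  exact ⟨u, by simpa using Nat.one_le_iff_ne_zero.mp hu, huv⟩

theorem domNumber_le_sum {f : α → ℕ} (hf : IsWRDF G f) : domNumber G ≤ ∑ v, f v :=
  (domNumber_le_card hf.isDomSet_support).trans (card_filter_ne_zero_le_sum f)

theorem weakRomanNumber_le_two_mul_domNumber (G : SimpleGraph α) :
    weakRomanNumber G ≤ 2 * domNumber G := by
  obtain ⟨D, hD, hcard⟩ := exists_isDomSet_card_eq_domNumber G
  have := weakRomanNumber_le_sum hD.isWRDF_double
  rw [sum_ite_mem, univ_inter, sum_const, smul_eq_mul] at this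
  omega

end WeakRoman

section LexProd

variable {α β : Type*} [Fintype α] [Fintype β] {G : SimpleGraph α} {H : SimpleGraph β}
  {g : α × β → ℕ}

noncomputable def neighborFiberWeight (G : SimpleGraph α) (g : α × β → ℕ) (a : α) : ℕ :=
  ∑ p ∈ univ.filter (fun p : α × β => G.Adj a p.1), g p

omit [Fintype α] [Fintype β] in
theorem moveUnit_lexProd_fiber (g : α × β → ℕ) (a : α) (x y b : β) :
    moveUnit g (a, x) (a, y) (a, b) = moveUnit (fun b => g (a, b)) x y b := by
  simp [moveUnit, update_apply]

omit [Fintype α] [Fintype β] in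
theorem moveUnit_lexProd_of_ne (g : α × β → ℕ) {a a' : α} (h : a' ≠ a) (x y b : β) :
    moveUnit g (a, x) (a, y) (a', b) = g (a', b) :=
  moveUnit_apply_of_ne g (by simp [h]) (by simp [h])

theorem sum_filter_fst_eq (g : α × β → ℕ) (a : α) :
    ∑ p ∈ univ.filter (fun p : α × β => p.1 = a), g p = ∑ b, g (a, b) := by
  rw [sum_filter, Fintype.sum_prod_type, Fintype.sum_eq_single a fun a' h => by simp [h]]
  simp

theorem sum_fibers_le (g : α × β → ℕ) (s : Finset α) :
    ∑ a ∈ s, ∑ b, g (a, b) ≤ ∑ p, g p := by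
  rw [Fintype.sum_prod_type]
  exact sum_le_sum_of_subset (subset_univ s)

theorem IsWRDF.lexProd_fiber (hg : IsWRDF (lexProd G H) g) {a : α}
    (ha : neighborFiberWeight G g a = 0) : IsWRDF H fun b => g (a, b) := by
  have hzero : ∀ p : α × β, G.Adj a p.1 → g p = 0 := fun p hp =>
    sum_eq_zero_iff.mp ha p (mem_filter.mpr ⟨mem_univ p, hp⟩)
  refine isWRDF_iff.mpr ⟨fun b => hg.1 _, fun y hy => ?_⟩
  obtain ⟨⟨a', x⟩, hadj, hx, hund⟩ := hg.exists_defender hy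
  rcases hadj with hG | ⟨h, hH⟩
  · exact absurd (hzero _ hG.symm) (by omega)
  obtain rfl : a = a' := h.symm
  refine ⟨x, hH, hx, fun w ⟨hw0, hwn⟩ => hund (a, w) ⟨?_, ?_⟩⟩
  · rwa [← moveUnit_lexProd_fiber] at hw0
  · rintro ⟨a'', b⟩ (hG | ⟨rfl, hH'⟩)
    · rw [moveUnit_lexProd_of_ne g hG.ne']
      exact hzero _ hG
    · rw [moveUnit_lexProd_fiber]
      exact hwn b hH'

omit [Fintype α] in
/-- Defending `(a, y)` must use the unit at `u`, which empties the copies around `a`. -/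
theorem IsWRDF.isDomSet_insert_lexProd_fiber (hg : IsWRDF (lexProd G H) g) {a : α}
    {u : α × β} (hu : G.Adj a u.1) (hgu : g u = 1)
    (hrest : ∀ p : α × β, G.Adj a p.1 → p ≠ u → g p = 0) {y : β} (hy : g (a, y) = 0)
    (hyn : ∀ x, H.Adj x y → g (a, x) = 0) :
    IsDomSet H (insert y (univ.filter fun b => g (a, b) ≠ 0)) := by
  obtain ⟨v, hadj, hv, hund⟩ := hg.exists_defender hy
  have hvu : v = u := by
    obtain ⟨a', x⟩ := v
    rcases hadj with hG | hH
    · by_contra h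
      exact absurd (hrest _ hG.symm h) (by omega)
    · obtain rfl : a = a' := hH.1.symm
      exact absurd (hyn x hH.2) (by omega)
  subst hvu
  have hne : ∀ b, ((a, b) : α × β) ≠ v := fun b h => hu.ne (by rw [← h])
  intro z hz
  by_contra! hnd
  refine hund (a, z) ⟨?_, ?_⟩
  · rw [moveUnit_apply_of_ne g (hne z) (by simp_all)]
    by_contra h
    exact hz (mem_insert_of_mem (by simpa using h))
  · rintro ⟨a', b⟩ (hG | ⟨rfl, hH⟩)
    · by_cases hb : (a', b) = v
      · rw [hb, moveUnit_apply_left, hgu]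
      · rw [moveUnit_apply_of_ne g hb (by simp [hG.ne'])]
        exact hrest _ hG hb
    · have hby : b ≠ y := by
        rintro rfl
        exact hnd b (mem_insert_self _ _) hH.symm
      rw [moveUnit_apply_of_ne g (hne b) (by simpa using hby)]
      by_contra h
      exact hnd b (mem_insert_of_mem (by simpa using h)) hH.symm

theorem domNumber_le_of_neighborFiberWeight_le_one (hg : IsWRDF (lexProd G H) g) {a : α}
    (ha : neighborFiberWeight G g a ≤ 1) :
    domNumber H ≤ ∑ b, g (a, b) + neighborFiberWeight G g a := by
  rcases Nat.le_one_iff_eq_zero_or_eq_one.mp ha with h0 | h1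
  · simpa [h0] using domNumber_le_sum (hg.lexProd_fiber h0)
  obtain ⟨u, hu, hgu⟩ := exists_ne_zero_of_sum_ne_zero (h1.symm ▸ one_ne_zero :
    neighborFiberWeight G g a ≠ 0)
  have hsplit := add_sum_erase _ g hu
  rw [← neighborFiberWeight, h1] at hsplit
  have hrest0 : ∑ p ∈ (univ.filter fun p : α × β => G.Adj a p.1).erase u, g p = 0 := by omega
  have hrest : ∀ p : α × β, G.Adj a p.1 → p ≠ u → g p = 0 := fun p hp hpu =>
    sum_eq_zero_iff.mp hrest0 p (mem_erase.mpr ⟨hpu, mem_filter.mpr ⟨mem_univ p, hp⟩⟩)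
  have hS := card_filter_ne_zero_le_sum fun b => g (a, b)
  rw [h1]
  by_cases hex : ∃ y, g (a, y) = 0 ∧ ∀ x, H.Adj x y → g (a, x) = 0
  · obtain ⟨y, hy, hyn⟩ := hex
    have hD := hg.isDomSet_insert_lexProd_fiber (mem_filter.mp hu).2 (by omega) hrest hy hyn
    exact (domNumber_le_card hD).trans ((card_insert_le _ _).trans (by omega))
  · push Not at hex
    have hD : IsDomSet H (univ.filter fun b => g (a, b) ≠ 0) := fun z hz => by
      obtain ⟨x, hxz, hx⟩ := hex z (by simpa using hz)
      exact ⟨x, by simpa using hx, hxz⟩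
    exact (domNumber_le_card hD).trans (by omega)

end LexProd

section UniversalVertex

variable {α β : Type*} [Fintype β] {G : SimpleGraph α} {H : SimpleGraph β} {a : α}

theorem fiber_add_neighborFiberWeight [Fintype α] (ha : ∀ x, x ≠ a → G.Adj a x)
    (g : α × β → ℕ) : ∑ b, g (a, b) + neighborFiberWeight G g a = ∑ p, g p := by
  have hnbr : (univ.filter fun p : α × β => G.Adj a p.1) = univ.filter fun p => ¬ p.1 = a :=
    filter_congr fun p _ => ⟨fun h => h.ne', ha p.1⟩
  rw [neighborFiberWeight, hnbr, ← sum_filter_fst_eq, sum_filter_add_sum_filter_not]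

/-- A vertex outside the copy over `a` is defended by any unit of `f`; since `f` has weight at
least `2`, a unit stays behind to protect the other copies. -/
theorem IsWRDF.lexProd_of_universal {f : β → ℕ} (hf : IsWRDF H f) (hsum : 2 ≤ ∑ b, f b)
    (ha : ∀ x, x ≠ a → G.Adj a x) :
    IsWRDF (lexProd G H) fun p => if p.1 = a then f p.2 else 0 := by
  set g : α × β → ℕ := fun p => if p.1 = a then f p.2 else 0
  have hga : ∀ b, g (a, b) = f b := fun b => if_pos rfl
  have hgfib : (fun b => g (a, b)) = f := funext hga
  refine isWRDF_iff.mpr ⟨fun p => by dsimp only [g]; split_ifs <;> simp [hf.1], ?_⟩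
  rintro ⟨a', y⟩ hy
  by_cases h : a' = a
  · subst h
    obtain ⟨x, hxy, hx, hund⟩ := hf.exists_defender (by rwa [← hga])
    refine ⟨(a', x), Or.inr ⟨rfl, hxy⟩, by rwa [hga], ?_⟩
    rintro ⟨a'', z⟩ ⟨hz0, hzn⟩
    by_cases h'' : a'' = a'
    · subst h''
      refine hund z ⟨by rwa [moveUnit_lexProd_fiber, hgfib] at hz0, fun b hb => ?_⟩
      simpa [moveUnit_lexProd_fiber, hgfib] using hzn (a'', b) (Or.inr ⟨rfl, hb⟩)
    · have := hzn (a', y) (Or.inl (ha a'' h'').symm)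
      rw [moveUnit_apply_right g (by simpa using hxy.ne)] at this
      exact one_ne_zero this
  obtain ⟨u, b, hu, hb, hbu⟩ := exists_two_units_of_two_le_sum hsum
  refine ⟨(a, u), Or.inl (ha a' h), by rw [hga]; omega, ?_⟩
  rintro ⟨a'', z⟩ ⟨hz0, hzn⟩
  by_cases h'' : a'' = a
  · subst h''
    have := hzn (a', y) (Or.inl (ha a' h))
    rw [moveUnit_apply_right g (by simp [Ne.symm h])] at this
    exact one_ne_zero this
  · have := hzn (a, b) (Or.inl (ha a'' h'').symm)
    by_cases hbu' : b = u
    · subst hbu'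
      rw [moveUnit_apply_left, hga] at this
      exact absurd this (by have := hbu rfl; omega)
    · rw [moveUnit_apply_of_ne g (by simpa using hbu') (by simp [Ne.symm h]), hga] at this
      exact hb this

theorem weakRomanNumber_lexProd_le_of_universal [Fintype α]
    (ha : ∀ x, x ≠ a → G.Adj a x) (hH : 2 ≤ weakRomanNumber H) :
    weakRomanNumber (lexProd G H) ≤ weakRomanNumber H := by
  obtain ⟨f, hf, hsum⟩ := exists_isWRDF_sum_eq_weakRomanNumber H
  refine (weakRomanNumber_le_sum (hf.lexProd_of_universal (by omega) ha)).trans_eq ?_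
  rw [← hsum, ← sum_filter, sum_filter_fst_eq]

theorem domNumber_lexProd_le_two [Fintype α] (ha : ∀ x, x ≠ a → G.Adj a x)
    {a' : α} (ha' : a' ≠ a) : domNumber (lexProd G H) ≤ 2 := by
  rcases isEmpty_or_nonempty β with hβ | ⟨⟨b⟩⟩
  · exact (domNumber_le_card (D := ∅) fun p _ => isEmptyElim p.2).trans (by simp)
  refine (domNumber_le_card (D := {(a, b), (a', b)}) ?_).trans (card_le_two)
  rintro ⟨x, y⟩ -
  by_cases hx : x = a
  · exact ⟨(a', b), by simp, Or.inl (hx ▸ (ha a' ha').symm)⟩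
  · exact ⟨(a, b), by simp, Or.inl (ha x hx)⟩

end UniversalVertex

section Star

variable {β : Type*} [Fintype β] {n : ℕ}

theorem star_center_adj :
    ∀ x, x ≠ Sum.inl 0 → (completeBipartiteGraph (Fin 1) (Fin n)).Adj (Sum.inl 0) x := by
  rintro (i | j) hx
  · exact absurd (congrArg Sum.inl (Subsingleton.elim i 0)) hx
  · simp

theorem neighborFiberWeight_star_leaf (g : (Fin 1 ⊕ Fin n) × β → ℕ) (j : Fin n) :
    neighborFiberWeight (completeBipartiteGraph (Fin 1) (Fin n)) g (Sum.inr j) =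
      ∑ b, g (Sum.inl 0, b) := by
  rw [neighborFiberWeight, ← sum_filter_fst_eq]
  congr 1
  ext ⟨x, b⟩
  rcases x with i | k
  · simp [Subsingleton.elim i 0]
  · simp

theorem weakRomanNumber_lexProd_star_le_four (hn : 1 ≤ n) (H : SimpleGraph β) :
    weakRomanNumber (lexProd (completeBipartiteGraph (Fin 1) (Fin n)) H) ≤ 4 := by
  have := domNumber_lexProd_le_two (H := H) star_center_adj
    (a' := (Sum.inr ⟨0, hn⟩ : Fin 1 ⊕ Fin n)) Sum.inr_ne_inl
  have := weakRomanNumber_le_two_mul_domNumber (lexProd (completeBipartiteGraph (Fin 1) (Fin n)) H)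
  omega

theorem min_domNumber_le_weakRomanNumber_lexProd_star (H : SimpleGraph β) :
    min (domNumber H) 4 ≤
      weakRomanNumber (lexProd (completeBipartiteGraph (Fin 1) (Fin n)) H) := by
  obtain ⟨g, hg, hw⟩ := exists_isWRDF_sum_eq_weakRomanNumber
    (lexProd (completeBipartiteGraph (Fin 1) (Fin n)) H)
  rw [← hw]
  have htot := fiber_add_neighborFiberWeight star_center_adj g
  by_cases hN : neighborFiberWeight (completeBipartiteGraph (Fin 1) (Fin n)) g (Sum.inl 0) ≤ 1
  · have := domNumber_le_of_neighborFiberWeight_le_one hg hN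
    omega
  obtain ⟨⟨x, b⟩, hx, -⟩ := exists_ne_zero_of_sum_ne_zero (by omega :
    neighborFiberWeight (completeBipartiteGraph (Fin 1) (Fin n)) g (Sum.inl 0) ≠ 0)
  obtain ⟨j, rfl⟩ : ∃ j, x = Sum.inr j := by
    rcases x with i | j
    · simp at hx
    · exact ⟨j, rfl⟩
  have hpair := sum_fibers_le g {Sum.inl 0, Sum.inr j}
  rw [sum_pair (by simp)] at hpair
  by_cases hc : ∑ b, g (Sum.inl 0, b) ≤ 1
  · have := domNumber_le_of_neighborFiberWeight_le_one hg (a := Sum.inr j)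
      (by rwa [neighborFiberWeight_star_leaf])
    rw [neighborFiberWeight_star_leaf] at this
    omega
  · omega

theorem min_weakRomanNumber_le_weakRomanNumber_lexProd_star (hn : 2 ≤ n) (H : SimpleGraph β) :
    min (weakRomanNumber H) 3 ≤
      weakRomanNumber (lexProd (completeBipartiteGraph (Fin 1) (Fin n)) H) := by
  obtain ⟨g, hg, hw⟩ := exists_isWRDF_sum_eq_weakRomanNumber
    (lexProd (completeBipartiteGraph (Fin 1) (Fin n)) H)
  rw [← hw]
  have htot := fiber_add_neighborFiberWeight star_center_adj g
  have hleaf := neighborFiberWeight_star_leaf g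
  have htriple := sum_fibers_le g {Sum.inl 0, Sum.inr ⟨0, by omega⟩, Sum.inr ⟨1, by omega⟩}
  rw [sum_insert (by simp), sum_pair (by simp)] at htriple
  by_cases hN : neighborFiberWeight (completeBipartiteGraph (Fin 1) (Fin n)) g (Sum.inl 0) = 0
  · have := weakRomanNumber_le_sum (hg.lexProd_fiber hN)
    omega
  by_cases hc : ∑ b, g (Sum.inl 0, b) = 0
  · have := weakRomanNumber_le_sum (hg.lexProd_fiber (a := Sum.inr ⟨0, by omega⟩) (hleaf _ ▸ hc))
    omega
  rcases le_or_gt 3 (∑ p, g p) with h3 | h3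
  · omega
  -- now the centre copy and the leaf copies carry one unit each, so some leaf copy is empty
  obtain ⟨j, hj⟩ : ∃ j : Fin n, ∑ b, g (Sum.inr j, b) = 0 := by
    by_cases h0 : ∑ b, g (Sum.inr ⟨0, by omega⟩, b) = 0
    · exact ⟨_, h0⟩
    · exact ⟨⟨1, by omega⟩, by omega⟩
  have := domNumber_le_of_neighborFiberWeight_le_one hg (a := Sum.inr j) (by rw [hleaf]; omega)
  have := weakRomanNumber_le_two_mul_domNumber H
  rw [hleaf, hj] at *
  omega

end Star

/-- For the star `K_{1,n}`, `n ≥ 3`: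
(i) if `γ_r(H) ∈ {2,3}` then `γ_r(K_{1,n}∘H) = γ_r(H)`;
(ii) if `γ_r(H) ≥ 4` then `3 ≤ γ_r(K_{1,n}∘H) ≤ 4`;
(iii) if `γ(H) ≥ 4` then `γ_r(K_{1,n}∘H) = 4`. -/
theorem weakRoman_lexProd_star {β : Type*} [Fintype β]
    (n : ℕ) (hn : 3 ≤ n) (H : SimpleGraph β) :
    ((weakRomanNumber H = 2 ∨ weakRomanNumber H = 3) →
      weakRomanNumber (lexProd (completeBipartiteGraph (Fin 1) (Fin n)) H) =
        weakRomanNumber H) ∧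
    (4 ≤ weakRomanNumber H →
      3 ≤ weakRomanNumber (lexProd (completeBipartiteGraph (Fin 1) (Fin n)) H) ∧
      weakRomanNumber (lexProd (completeBipartiteGraph (Fin 1) (Fin n)) H) ≤ 4) ∧
    (4 ≤ domNumber H →
      weakRomanNumber (lexProd (completeBipartiteGraph (Fin 1) (Fin n)) H) = 4) := by
  have hlow := min_weakRomanNumber_le_weakRomanNumber_lexProd_star (by omega : 2 ≤ n) H
  have hlowDom := min_domNumber_le_weakRomanNumber_lexProd_star (n := n) H
  have hup := weakRomanNumber_lexProd_star_le_four (by omega : 1 ≤ n) H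
  refine ⟨fun h => le_antisymm ?_ (by omega), fun h => ⟨by omega, hup⟩, fun h => by omega⟩
  exact weakRomanNumber_lexProd_le_of_universal star_center_adj (by omega)
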